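/- arXiv:1107.4689 — 6 statements merged into one kernel-verified Lean document; each statement's English description precedes it below -/
import Mathlib

section
/- There exists a constant C > 0 such that for every ν ∈ (-1,1) \ {0} and every integer k > 0, C⁻¹·((1-ν)/(1+ν))·(1+k)^(-ν) ≤ ∏_{i=1}^{k} (2i-1-ν)/(2i-1+ν) ≤ C·((1-ν)/(1+ν))·(1+k)^(-ν). -/
open Finset Real

/-!
For `i ≥ 2` the factor `(2i - 1 - ν)/(2i - 1 + ν)` is `(1 - x)/(1 + x)` with `x = ν/(2i - 1)`,
`|x| ≤ 1/3`, so its logarithm is `-2x + O(x²)`. Hence the logarithm of the product over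
`2 ≤ i ≤ k` is `-ν ∑ 2/(2i - 1)` up to the convergent sum `3 ∑ 1/(2i - 1)²`, and comparing
`2/(2i - 1)` with `log (2i + 1) - log (2i - 1)` shows `∑ 2/(2i - 1) = log (1 + k) + O(1)`.
The factor `i = 1` is `(1 - ν)/(1 + ν)`, which is kept exactly since it degenerates as `ν → ±1`.
-/

lemma div_add_le_log_add_sub_log {y h : ℝ} (hy : 0 < y) (hyh : 0 < y + h) :
    h / (y + h) ≤ log (y + h) - log y := by
  rw [← log_div hyh.ne' hy.ne']
  calc h / (y + h) = 1 - ((y + h) / y)⁻¹ := by field_simp; ring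
    _ ≤ log ((y + h) / y) := one_sub_inv_le_log_of_pos (div_pos hyh hy)

lemma log_add_sub_log_le_div {y h : ℝ} (hy : 0 < y) (hyh : 0 < y + h) :
    log (y + h) - log y ≤ h / y := by
  rw [← log_div hyh.ne' hy.ne']
  calc log ((y + h) / y) ≤ (y + h) / y - 1 := log_le_sub_one_of_pos (div_pos hyh hy)
    _ = h / y := by field_simp; ring

lemma sum_range_inv_odd_sq_le (n : ℕ) : ∑ j ∈ range n, 1 / (2 * (j : ℝ) + 3) ^ 2 ≤ 1 / 2 := by
  let f : ℕ → ℝ := fun j => -1 / (2 * (2 * j + 1))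
  calc ∑ j ∈ range n, 1 / (2 * (j : ℝ) + 3) ^ 2 ≤ ∑ j ∈ range n, (f (j + 1) - f j) := by
        refine sum_le_sum fun j _ => ?_
        have hj : (0 : ℝ) ≤ j := j.cast_nonneg
        simp only [f]; push_cast
        rw [div_le_iff₀ (by positivity)]
        field_simp
        nlinarith
    _ = 1 / 2 - 1 / (2 * (2 * n + 1)) := by
        rw [sum_range_sub]; simp only [f]; push_cast; field_simp; ring
    _ ≤ 1 / 2 := sub_le_self _ (by positivity)

lemma abs_sum_range_two_div_odd_sub_log_le (n : ℕ) :
    |∑ j ∈ range n, 2 / (2 * (j : ℝ) + 3) - log (n + 2)| ≤ 2 := by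
  have hn : (0 : ℝ) ≤ n := n.cast_nonneg
  have hupper : ∑ j ∈ range n, 2 / (2 * (j : ℝ) + 3) ≤ log (2 * n + 1) := by
    let f : ℕ → ℝ := fun j => log (2 * j + 1)
    calc ∑ j ∈ range n, 2 / (2 * (j : ℝ) + 3) ≤ ∑ j ∈ range n, (f (j + 1) - f j) := by
          refine sum_le_sum fun j _ => ?_
          have hj : (0 : ℝ) ≤ j := j.cast_nonneg
          have := div_add_le_log_add_sub_log (y := 2 * j + 1) (h := 2) (by linarith) (by linarith)
          simp only [f]; push_cast; ring_nf at this ⊢; linarith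
      _ = log (2 * n + 1) := by rw [sum_range_sub]; simp [f]
  have hlower : log (2 * n + 3) - log 3 ≤ ∑ j ∈ range n, 2 / (2 * (j : ℝ) + 3) := by
    let f : ℕ → ℝ := fun j => log (2 * j + 3)
    calc log (2 * n + 3) - log 3 = ∑ j ∈ range n, (f (j + 1) - f j) := by rw [sum_range_sub]; simp [f]
      _ ≤ ∑ j ∈ range n, 2 / (2 * (j : ℝ) + 3) := by
          refine sum_le_sum fun j _ => ?_
          have hj : (0 : ℝ) ≤ j := j.cast_nonneg
          have := log_add_sub_log_le_div (y := 2 * j + 3) (h := 2) (by linarith) (by linarith)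
          simp only [f]; push_cast; ring_nf at this ⊢; linarith
  have hlog2 : log 2 ≤ 1 := by linarith [log_le_sub_one_of_pos (by norm_num : (0 : ℝ) < 2)]
  have hlog3 : log 3 ≤ 2 := by linarith [log_le_sub_one_of_pos (by norm_num : (0 : ℝ) < 3)]
  have h1 : log (2 * n + 1) ≤ log 2 + log (n + 2) := by
    rw [← log_mul (by norm_num) (by linarith)]; exact log_le_log (by linarith) (by linarith)
  have h2 : log (n + 2) ≤ log (2 * n + 3) := log_le_log (by linarith) (by linarith)
  rw [abs_le]; constructor <;> linarith

lemma abs_log_one_sub_div_one_add_add_two_mul_le {x : ℝ} (hx : |x| < 1) :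
    |log ((1 - x) / (1 + x)) + 2 * x| ≤ 2 * x ^ 2 / (1 - |x|) := by
  have hminus := abs_log_sub_add_sum_range_le hx 1
  have hplus := abs_log_sub_add_sum_range_le (x := -x) (by rwa [abs_neg]) 1
  norm_num [sq_abs] at hminus hplus
  obtain ⟨hlt, hgt⟩ := abs_lt.mp hx
  rw [log_div (by linarith) (by linarith)]
  calc |log (1 - x) - log (1 + x) + 2 * x|
      = |(x + log (1 - x)) - (-x + log (1 + x))| := by ring_nf
    _ ≤ |x + log (1 - x)| + |-x + log (1 + x)| := abs_sub _ _
    _ ≤ 2 * x ^ 2 / (1 - |x|) := by rw [mul_div_assoc]; linarith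

lemma abs_log_odd_ratio_add_le {ν : ℝ} (hν : |ν| ≤ 1) (j : ℕ) :
    |log ((2 * j + 3 - ν) / (2 * j + 3 + ν)) + ν * (2 / (2 * j + 3))| ≤ 3 / (2 * j + 3) ^ 2 := by
  have hm : (3 : ℝ) ≤ 2 * j + 3 := by linarith [(Nat.cast_nonneg j : (0 : ℝ) ≤ j)]
  set x := ν / (2 * j + 3) with hx_def
  have hx : |x| ≤ 1 / 3 := by
    rw [abs_div, abs_of_pos (by linarith : (0 : ℝ) < 2 * j + 3), div_le_iff₀ (by linarith)]
    linarith
  have hratio : (2 * j + 3 - ν) / (2 * j + 3 + ν) = (1 - x) / (1 + x) := by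
    rw [hx_def]; field_simp
  have htwo : ν * (2 / (2 * j + 3)) = 2 * x := by rw [hx_def]; ring
  calc |log ((2 * j + 3 - ν) / (2 * j + 3 + ν)) + ν * (2 / (2 * j + 3))|
      = |log ((1 - x) / (1 + x)) + 2 * x| := by rw [hratio, htwo]
    _ ≤ 2 * x ^ 2 / (1 - |x|) := abs_log_one_sub_div_one_add_add_two_mul_le (by linarith)
    _ ≤ 3 * x ^ 2 := by rw [div_le_iff₀ (by linarith)]; nlinarith [sq_nonneg x]
    _ ≤ 3 / (2 * j + 3) ^ 2 := by
      rw [hx_def, div_pow, mul_div_assoc']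
      gcongr
      nlinarith [abs_nonneg ν, sq_abs ν]

lemma abs_log_prod_odd_ratio_add_mul_log_le {ν : ℝ} (hν : |ν| ≤ 1) (n : ℕ) :
    |log (∏ j ∈ range n, (2 * (j : ℝ) + 3 - ν) / (2 * j + 3 + ν)) + ν * log (n + 2)| ≤ 4 := by
  obtain ⟨hν₁, hν₂⟩ := abs_le.mp hν
  have hpos : ∀ j ∈ range n, (2 * (j : ℝ) + 3 - ν) / (2 * j + 3 + ν) ≠ 0 := fun j _ => by
    have hj : (0 : ℝ) ≤ j := j.cast_nonneg
    exact (div_pos (by linarith) (by linarith)).ne'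
  rw [log_prod hpos]
  set S := ∑ j ∈ range n, 2 / (2 * (j : ℝ) + 3)
  have hsplit : ∑ j ∈ range n, log ((2 * (j : ℝ) + 3 - ν) / (2 * j + 3 + ν)) + ν * log (n + 2) =
      ∑ j ∈ range n, (log ((2 * (j : ℝ) + 3 - ν) / (2 * j + 3 + ν)) + ν * (2 / (2 * j + 3))) -
        ν * (S - log (n + 2)) := by
    rw [sum_add_distrib, ← mul_sum]; ring
  have hlog : |ν * (S - log (n + 2))| ≤ 2 := by
    rw [abs_mul]
    nlinarith [abs_nonneg ν, abs_nonneg (S - log (n + 2)), abs_sum_range_two_div_odd_sub_log_le n]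
  calc _ ≤ |∑ j ∈ range n, (log ((2 * (j : ℝ) + 3 - ν) / (2 * j + 3 + ν)) + ν * (2 / (2 * j + 3)))|
          + |ν * (S - log (n + 2))| := by rw [hsplit]; exact abs_sub _ _
    _ ≤ ∑ j ∈ range n, 3 / (2 * (j : ℝ) + 3) ^ 2 + 2 := by
        gcongr
        exact (abs_sum_le_sum_abs _ _).trans (sum_le_sum fun j _ => abs_log_odd_ratio_add_le hν j)
    _ = 3 * ∑ j ∈ range n, 1 / (2 * (j : ℝ) + 3) ^ 2 + 2 := by simp only [mul_sum, mul_one_div]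
    _ ≤ 4 := by linarith [sum_range_inv_odd_sq_le n]

lemma exp_neg_mul_le_and_le_exp_mul_of_abs_log_sub_log_le {x y c : ℝ} (hx : 0 < x) (hy : 0 < y)
    (h : |log x - log y| ≤ c) : exp (-c) * y ≤ x ∧ x ≤ exp c * y := by
  obtain ⟨hlo, hhi⟩ := abs_le.mp h
  rw [← exp_log hx, ← exp_log hy, ← exp_add, ← exp_add, exp_le_exp, exp_le_exp]
  constructor <;> linarith

lemma prod_Icc_one_succ_eq_mul_prod_range {M : Type*} [CommMonoid M] (f : ℕ → M) (n : ℕ) :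
    ∏ i ∈ Icc 1 (n + 1), f i = f 1 * ∏ j ∈ range n, f (j + 2) := by
  rw [← Ico_add_one_right_eq_Icc, prod_eq_prod_Ico_succ_bot (by omega), range_eq_Ico, prod_Ico_add']
  rfl

theorem stmt4 : ∃ C : ℝ, 0 < C ∧ ∀ ν : ℝ, ν ∈ Set.Ioo (-1 : ℝ) 1 → ν ≠ 0 → ∀ k : ℕ, 0 < k →
    C⁻¹ * ((1 - ν) / (1 + ν)) * (1 + (k : ℝ)) ^ (-ν) ≤
      (∏ i ∈ Finset.Icc 1 k, (2 * (i : ℝ) - 1 - ν) / (2 * (i : ℝ) - 1 + ν)) ∧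
    (∏ i ∈ Finset.Icc 1 k, (2 * (i : ℝ) - 1 - ν) / (2 * (i : ℝ) - 1 + ν)) ≤
      C * ((1 - ν) / (1 + ν)) * (1 + (k : ℝ)) ^ (-ν) := by
  refine ⟨exp 4, exp_pos 4, fun ν ⟨hν₁, hν₂⟩ _ k hk => ?_⟩
  obtain ⟨n, rfl⟩ := Nat.exists_eq_add_one_of_ne_zero hk.ne'
  set Q := ∏ j ∈ range n, (2 * (j : ℝ) + 3 - ν) / (2 * j + 3 + ν)
  have hprod : ∏ i ∈ Icc 1 (n + 1), (2 * (i : ℝ) - 1 - ν) / (2 * (i : ℝ) - 1 + ν) =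
      (1 - ν) / (1 + ν) * Q := by
    rw [prod_Icc_one_succ_eq_mul_prod_range]
    congr 1
    · norm_num
    · exact prod_congr rfl fun j _ => by push_cast; ring_nf
  have hQ : 0 < Q := prod_pos fun j _ => by
    have hj : (0 : ℝ) ≤ j := j.cast_nonneg
    exact div_pos (by linarith) (by linarith)
  have hbase : (0 : ℝ) < 1 + (n + 1 : ℕ) := by positivity
  obtain ⟨hlower, hupper⟩ := exp_neg_mul_le_and_le_exp_mul_of_abs_log_sub_log_le hQ
    (rpow_pos_of_pos hbase (-ν)) (c := 4) (by
      rw [log_rpow hbase, show (1 : ℝ) + (n + 1 : ℕ) = n + 2 by push_cast; ring, neg_mul,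
        sub_neg_eq_add]
      exact abs_log_prod_odd_ratio_add_mul_log_le (abs_le.mpr ⟨hν₁.le, hν₂.le⟩) n)
  have hratio : 0 < (1 - ν) / (1 + ν) := div_pos (by linarith) (by linarith)
  rw [hprod, ← exp_neg]
  constructor <;> linarith [mul_le_mul_of_nonneg_left hlower hratio.le,
    mul_le_mul_of_nonneg_left hupper hratio.le]
end

section
/- For the complementary series (ν ∈ (-1,1)\{0}, ε = 0), for every integer k, ((1+ν)/(3-ν))·((4|k|-3+ν)/(1+ν))^((ν-1)/2) ≤ |g⁰(2k)| ≤ ((4|k|+3-ν)/(3-ν))^((ν-1)/2), where g⁰(2k) = ∏_{j=0}^{|k|-1} b⁺(2j)/b⁻(2j+2). -/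
open Finset Real

theorem stmt8 (ν : ℝ) (h1 : ν ∈ Set.Ioo (-1 : ℝ) 1) (h2 : ν ≠ 0) (k : ℤ) (hk : 1 ≤ k.natAbs) :
    (1 + ν) / (3 - ν) * (((4 * (k.natAbs : ℝ) - 3 + ν) / (1 + ν)) ^ ((ν - 1) / 2)) ≤
      |∏ j ∈ Finset.range k.natAbs, ((4 * (j : ℝ) + 1 + ν) / 4) / ((4 * (j : ℝ) + 3 - ν) / 4)| ∧
    |∏ j ∈ Finset.range k.natAbs, ((4 * (j : ℝ) + 1 + ν) / 4) / ((4 * (j : ℝ) + 3 - ν) / 4)| ≤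
      ((4 * (k.natAbs : ℝ) + 3 - ν) / (3 - ν)) ^ ((ν - 1) / 2) := by
  obtain ⟨hν1, hν2⟩ := h1
  have h1ν : (0:ℝ) < 1 + ν := by linarith
  have h3ν : (0:ℝ) < 3 - ν := by linarith
  set n := k.natAbs with hndef
  set s : ℝ := (1 - ν) / 2 with hsdef
  have hs0 : 0 < s := by rw [hsdef]; linarith
  have hs1 : s < 1 := by rw [hsdef]; linarith
  have hνs : (ν - 1) / 2 = -s := by rw [hsdef]; ring
  set f : ℕ → ℝ := fun j => (4 * (j : ℝ) + 1 + ν) / (4 * (j : ℝ) + 3 - ν) with hfdef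
  have hnum : ∀ j : ℕ, (0:ℝ) < 4 * (j : ℝ) + 1 + ν := by
    intro j; have : (0:ℝ) ≤ (j:ℝ) := j.cast_nonneg; linarith
  have hden : ∀ j : ℕ, (0:ℝ) < 4 * (j : ℝ) + 3 - ν := by
    intro j; have : (0:ℝ) ≤ (j:ℝ) := j.cast_nonneg; linarith
  have hfpos : ∀ j : ℕ, 0 < f j := fun j => div_pos (hnum j) (hden j)
  have hprod : ∀ m : ℕ, ∏ j ∈ Finset.range m, ((4 * (j : ℝ) + 1 + ν) / 4) / ((4 * (j : ℝ) + 3 - ν) / 4)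
      = ∏ j ∈ Finset.range m, f j := by
    intro m
    refine Finset.prod_congr rfl fun j _ => ?_
    rw [hfdef]
    have := (hden j).ne'
    field_simp
  -- key upper inequality
  have key_up : ∀ a : ℝ, 0 < a - 4 * s → 0 < a → (a - 4 * s) / a ≤ ((a + 4) / a) ^ (-s) := by
    intro a ha1 ha2
    have hr : (a + 4) / a = 1 + 4 / a := by field_simp
    have hrpos : (0:ℝ) < (a + 4) / a := div_pos (by linarith) ha2
    have hxnn : (0:ℝ) ≤ 4 / a := by positivity
    have hb : ((a + 4) / a) ^ s ≤ 1 + s * (4 / a) := by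
      rw [hr]
      exact rpow_one_add_le_one_add_mul_self (by linarith) hs0.le hs1.le
    have hrs : 0 < ((a + 4) / a) ^ s := Real.rpow_pos_of_pos hrpos s
    have hfnn : (0:ℝ) ≤ (a - 4 * s) / a := le_of_lt (div_pos ha1 ha2)
    rw [Real.rpow_neg hrpos.le, ← one_div, le_div_iff₀ hrs]
    calc (a - 4 * s) / a * ((a + 4) / a) ^ s
        ≤ (a - 4 * s) / a * (1 + s * (4 / a)) := mul_le_mul_of_nonneg_left hb hfnn
      _ = 1 - (4 * s / a) ^ 2 := by field_simp; ring
      _ ≤ 1 := by nlinarith [sq_nonneg (4 * s / a)]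
  -- key lower inequality
  have key_low : ∀ b : ℝ, 0 < b → 1 + 4 * s / (b + 4) ≤ ((b + 4) / b) ^ s := by
    intro b hb
    have hb4 : (0:ℝ) < b + 4 := by linarith
    have hbs : (0:ℝ) < b + 4 - 4 * s := by rw [hsdef]; linarith
    have hrr : (b + 4) / b = 1 + 4 / b := by field_simp
    have hrpos : (0:ℝ) < (b + 4) / b := div_pos hb4 hb
    have hxnn : (0:ℝ) ≤ 4 / b := by positivity
    have hbern : ((b + 4) / b) ^ (1 - s) ≤ 1 + (1 - s) * (4 / b) := by
      rw [hrr]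
      exact rpow_one_add_le_one_add_mul_self (by linarith) (by linarith) (by linarith)
    have hsplit : ((b + 4) / b) ^ s * ((b + 4) / b) ^ (1 - s) = (b + 4) / b := by
      rw [← Real.rpow_add hrpos]; norm_num
    have hp1 : 0 < ((b + 4) / b) ^ s := Real.rpow_pos_of_pos hrpos s
    have heb : 1 + (1 - s) * (4 / b) = (b + 4 - 4 * s) / b := by field_simp; ring
    have hd : (0:ℝ) < 1 + (1 - s) * (4 / b) := by rw [heb]; exact div_pos hbs hb
    have step : (b + 4) / b / (1 + (1 - s) * (4 / b)) ≤ ((b + 4) / b) ^ s := by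
      rw [div_le_iff₀ hd]
      calc (b + 4) / b = ((b + 4) / b) ^ s * ((b + 4) / b) ^ (1 - s) := hsplit.symm
        _ ≤ ((b + 4) / b) ^ s * (1 + (1 - s) * (4 / b)) :=
            mul_le_mul_of_nonneg_left hbern hp1.le
    have hea : 1 + 4 * s / (b + 4) = (b + 4 + 4 * s) / (b + 4) := by field_simp
    have hec : (b + 4) / b / ((b + 4 - 4 * s) / b) = (b + 4) / (b + 4 - 4 * s) := by
      rw [div_div_div_comm, div_self hb.ne', div_one]
    have main : 1 + 4 * s / (b + 4) ≤ (b + 4) / b / (1 + (1 - s) * (4 / b)) := by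
      rw [heb, hec, hea, div_le_div_iff₀ hb4 hbs]
      nlinarith [sq_nonneg s]
    linarith
  -- upper bound by induction
  have hup : ∀ m : ℕ, ∏ j ∈ Finset.range m, f j ≤ ((4 * (m : ℝ) + 3 - ν) / (3 - ν)) ^ (-s) := by
    intro m
    induction m with
    | zero =>
        simp only [Finset.range_zero, Finset.prod_empty, Nat.cast_zero]
        rw [show (4 * (0:ℝ) + 3 - ν) = 3 - ν by ring, div_self h3ν.ne', Real.one_rpow]
    | succ m ih =>
        rw [Finset.prod_range_succ]
        have hAm := hden m
        have hfm : f m ≤ ((4 * ((m:ℝ) + 1) + 3 - ν) / (4 * (m:ℝ) + 3 - ν)) ^ (-s) := by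
          have e1 : 4 * (m:ℝ) + 3 - ν - 4 * s = 4 * (m:ℝ) + 1 + ν := by rw [hsdef]; ring
          have e2 : 4 * (m:ℝ) + 3 - ν + 4 = 4 * ((m:ℝ) + 1) + 3 - ν := by ring
          have := key_up (4 * (m:ℝ) + 3 - ν) (by rw [e1]; exact hnum m) hAm
          rw [e1, e2] at this
          exact this
        have hRpos : (0:ℝ) ≤ ((4 * (m:ℝ) + 3 - ν) / (3 - ν)) ^ (-s) :=
          (Real.rpow_pos_of_pos (div_pos hAm h3ν) _).le
        calc (∏ j ∈ Finset.range m, f j) * f m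
            ≤ ((4 * (m:ℝ) + 3 - ν) / (3 - ν)) ^ (-s) * f m :=
              mul_le_mul_of_nonneg_right ih (hfpos m).le
          _ ≤ ((4 * (m:ℝ) + 3 - ν) / (3 - ν)) ^ (-s) *
              ((4 * ((m:ℝ) + 1) + 3 - ν) / (4 * (m:ℝ) + 3 - ν)) ^ (-s) :=
              mul_le_mul_of_nonneg_left hfm hRpos
          _ = ((4 * ((m:ℕ) + 1 : ℕ) + 3 - ν) / (3 - ν)) ^ (-s) := by
              rw [← Real.mul_rpow (le_of_lt (div_pos hAm h3ν))
                (le_of_lt (div_pos (by linarith) hAm))]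
              congr 1
              push_cast
              field_simp
  -- lower bound by induction
  have hlow : ∀ m : ℕ, 1 ≤ m →
      (1 + ν) / (3 - ν) * ((4 * (m : ℝ) - 3 + ν) / (1 + ν)) ^ (-s) ≤ ∏ j ∈ Finset.range m, f j := by
    intro m hm
    induction m, hm using Nat.le_induction with
    | base =>
        rw [Finset.prod_range_one]
        rw [show (4 * ((1:ℕ):ℝ) - 3 + ν) = 1 + ν by push_cast; ring, div_self h1ν.ne',
          Real.one_rpow, mul_one, hfdef]
        apply le_of_eq
        norm_num
    | succ m hm ih =>
        rw [Finset.prod_range_succ]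
        have hm1 : (1:ℝ) ≤ (m:ℝ) := by exact_mod_cast hm
        have hb : (0:ℝ) < 4 * (m:ℝ) - 3 + ν := by linarith
        have hb4 : (0:ℝ) < 4 * (m:ℝ) - 3 + ν + 4 := by linarith
        have hfm : ((4 * (m:ℝ) - 3 + ν + 4) / (4 * (m:ℝ) - 3 + ν)) ^ (-s) ≤ f m := by
          have hkey := key_low (4 * (m:ℝ) - 3 + ν) hb
          have hdpos : (0:ℝ) < 1 + 4 * s / (4 * (m:ℝ) - 3 + ν + 4) := by positivity
          have hrpos : (0:ℝ) < (4 * (m:ℝ) - 3 + ν + 4) / (4 * (m:ℝ) - 3 + ν) :=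
            div_pos hb4 hb
          have h4s : 4 * s = 2 - 2 * ν := by rw [hsdef]; ring
          have e0 : 1 + 4 * s / (4 * (m:ℝ) - 3 + ν + 4)
              = (4 * (m:ℝ) + 3 - ν) / (4 * (m:ℝ) + 1 + ν) := by
            rw [show 4 * (m:ℝ) - 3 + ν + 4 = 4 * (m:ℝ) + 1 + ν by ring, h4s]
            rw [add_div' _ _ _ (hnum m).ne']
            congr 1
            ring
          have einv : (1 + 4 * s / (4 * (m:ℝ) - 3 + ν + 4))⁻¹ = f m := by
            rw [e0, inv_div, hfdef]
          rw [Real.rpow_neg hrpos.le, ← einv]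
          exact inv_anti₀ hdpos hkey
        have hsplit : (4 * ((m:ℝ) + 1) - 3 + ν) / (1 + ν)
            = ((4 * (m:ℝ) - 3 + ν) / (1 + ν)) * ((4 * (m:ℝ) - 3 + ν + 4) / (4 * (m:ℝ) - 3 + ν)) := by
          field_simp
          ring
        have hrw : ((4 * (((m:ℕ) + 1 : ℕ) : ℝ) - 3 + ν) / (1 + ν)) ^ (-s)
            = ((4 * (m:ℝ) - 3 + ν) / (1 + ν)) ^ (-s) *
              ((4 * (m:ℝ) - 3 + ν + 4) / (4 * (m:ℝ) - 3 + ν)) ^ (-s) := by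
          rw [← Real.mul_rpow (le_of_lt (div_pos hb h1ν)) (le_of_lt (div_pos hb4 hb))]
          congr 1
          push_cast
          rw [hsplit]
        rw [hrw]
        calc (1 + ν) / (3 - ν) * (((4 * (m:ℝ) - 3 + ν) / (1 + ν)) ^ (-s) *
              ((4 * (m:ℝ) - 3 + ν + 4) / (4 * (m:ℝ) - 3 + ν)) ^ (-s))
            = ((1 + ν) / (3 - ν) * ((4 * (m:ℝ) - 3 + ν) / (1 + ν)) ^ (-s)) *
              ((4 * (m:ℝ) - 3 + ν + 4) / (4 * (m:ℝ) - 3 + ν)) ^ (-s) := by ring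
          _ ≤ (∏ j ∈ Finset.range m, f j) * f m := by
              apply mul_le_mul ih hfm (Real.rpow_pos_of_pos (div_pos hb4 hb) _).le
              exact (Finset.prod_pos fun j _ => hfpos j).le
  have hPpos : 0 < ∏ j ∈ Finset.range n, f j := Finset.prod_pos fun j _ => hfpos j
  rw [hprod n, abs_of_pos hPpos, hνs]
  exact ⟨hlow n hk, hup n⟩
end

section
/- For the discrete series (ν = 2n + ε - 1, n a positive integer, ε ∈ {0,1}), for every integer k ≥ 1, ((2k+ν+1)/(ν+1))^((ν-1)/2) ≤ |g⁰(n+2k)| ≤ ((ν+1)/2)·k^((ν-1)/2), where g⁰(n+2k) = ∏_{j=0}^{k-1} b⁺(n+2j)/b⁻(n+2j+2). -/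
/-!
Writing `ν = 2a + 1`, the `j`-th factor of `g⁰(n + 2k)` is `(j + a + 1) / (j + 1)` with `a ≥ 0`,
so both bounds follow by induction on `k` once each new factor is compared with the ratio of
consecutive values of the bound. For the lower bound this comparison is `(1 + 1/x)^a ≤ exp (a/x)`
followed by `exp t ≤ 1/(1 - t)`; for the upper bound it is Bernoulli's inequality
`1 + (a + 1)/x ≤ (1 + 1/x)^(a + 1)`.
-/

open Finset Real

lemma rpow_succ_div_le_div_sub {a x : ℝ} (ha : 0 ≤ a) (hax : a < x) :
    ((x + 1) / x) ^ a ≤ x / (x - a) := by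
  have hx : 0 < x := ha.trans_lt hax
  calc ((x + 1) / x) ^ a ≤ exp x⁻¹ ^ a := by
        gcongr
        rw [add_div, div_self hx.ne', one_div]
        linarith [add_one_le_exp x⁻¹]
    _ = exp (a / x) := by rw [← exp_mul, inv_mul_eq_div]
    _ ≤ 1 / (1 - a / x) :=
        exp_bound_div_one_sub_of_interval (by positivity) ((div_lt_one hx).2 hax)
    _ = x / (x - a) := by field_simp

lemma add_succ_div_succ_le_rpow_succ_div {a x : ℝ} (ha : 0 ≤ a) (hx : 0 < x) :
    (x + a + 1) / (x + 1) ≤ ((x + 1) / x) ^ a := by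
  have hq : 0 < (x + 1) / x := by positivity
  have bernoulli : 1 + (a + 1) * x⁻¹ ≤ ((x + 1) / x) ^ a * ((x + 1) / x) := by
    have h := one_add_mul_self_le_rpow_one_add (s := x⁻¹) (by linarith [inv_pos.2 hx])
      (p := a + 1) (by linarith)
    rwa [show 1 + x⁻¹ = (x + 1) / x by field_simp, rpow_add hq, rpow_one] at h
  rw [div_le_iff₀ (by positivity)]
  calc x + a + 1 = (1 + (a + 1) * x⁻¹) * x := by field_simp; ring
    _ ≤ ((x + 1) / x) ^ a * ((x + 1) / x) * x := by gcongr
    _ = ((x + 1) / x) ^ a * (x + 1) := by field_simp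

lemma rpow_le_prod_div {a : ℝ} (ha : 0 ≤ a) (k : ℕ) :
    ((k + a + 1) / (a + 1)) ^ a ≤ ∏ j ∈ range k, (j + a + 1) / (j + 1) := by
  induction k with
  | zero => simp [div_self (by positivity : a + 1 ≠ 0)]
  | succ k ih =>
    have hstep : ((k + a + 1 + 1) / (k + a + 1)) ^ a ≤ (k + a + 1) / (k + 1) := by
      convert rpow_succ_div_le_div_sub ha (x := k + a + 1) (by linarith) using 2; ring
    rw [prod_range_succ, Nat.cast_succ]
    calc ((k + 1 + a + 1) / (a + 1)) ^ a
        = ((k + a + 1) / (a + 1)) ^ a * ((k + a + 1 + 1) / (k + a + 1)) ^ a := by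
          rw [← mul_rpow (by positivity) (by positivity)]
          congr 1
          field_simp
          ring
      _ ≤ (∏ j ∈ range k, (j + a + 1) / (j + 1)) * ((k + a + 1) / (k + 1)) := by
          gcongr

lemma prod_div_le_mul_rpow {a : ℝ} (ha : 0 ≤ a) {k : ℕ} (hk : 1 ≤ k) :
    ∏ j ∈ range k, (j + a + 1) / (j + 1) ≤ (a + 1) * (k : ℝ) ^ a := by
  induction k, hk using Nat.le_induction with
  | base => simp
  | succ k hk ih =>
    have hk0 : (0 : ℝ) < k := by exact_mod_cast hk
    rw [prod_range_succ, Nat.cast_succ]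
    calc (∏ j ∈ range k, (j + a + 1) / (j + 1)) * ((k + a + 1) / (k + 1))
        ≤ (a + 1) * (k : ℝ) ^ a * ((k + 1) / k) ^ a := by
          gcongr
          exact add_succ_div_succ_le_rpow_succ_div ha hk0
      _ = (a + 1) * ((k : ℝ) + 1) ^ a := by
          rw [mul_assoc, ← mul_rpow hk0.le (by positivity), mul_div_cancel₀ _ hk0.ne']

theorem stmt9_general (n : ℕ) (hn : 1 ≤ n) (ε : ℕ) (ν : ℝ)
    (hν : ν = 2 * (n : ℝ) + ε - 1) (k : ℕ) (hk : 1 ≤ k) :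
    ((2 * (k : ℝ) + ν + 1) / (ν + 1)) ^ ((ν - 1) / 2) ≤
      |∏ j ∈ Finset.range k,
        ((2 * ((n : ℝ) + 2 * j) + ε + 1 + ν) / 4) / ((2 * ((n : ℝ) + 2 * j + 2) + ε - 1 - ν) / 4)| ∧
    |∏ j ∈ Finset.range k,
        ((2 * ((n : ℝ) + 2 * j) + ε + 1 + ν) / 4) / ((2 * ((n : ℝ) + 2 * j + 2) + ε - 1 - ν) / 4)| ≤
      ((ν + 1) / 2) * (k : ℝ) ^ ((ν - 1) / 2) := by
  obtain ⟨a, rfl⟩ : ∃ a : ℝ, ν = 2 * a + 1 := ⟨(ν - 1) / 2, by ring⟩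
  have ha : 0 ≤ a := by
    have : (1 : ℝ) ≤ n := by exact_mod_cast hn
    linarith [(Nat.cast_nonneg ε : (0 : ℝ) ≤ ε)]
  have hfactor : ∀ j : ℕ, ((2 * ((n : ℝ) + 2 * j) + ε + 1 + (2 * a + 1)) / 4) /
      ((2 * ((n : ℝ) + 2 * j + 2) + ε - 1 - (2 * a + 1)) / 4) = (j + a + 1) / (j + 1) := by
    intro j
    congr 1 <;> linear_combination -hν / 4
  simp only [hfactor]
  rw [abs_of_pos (prod_pos fun j _ => by positivity)]
  rw [show (2 * a + 1 - 1) / 2 = a by ring, show (2 * a + 1 + 1) / 2 = a + 1 by ring,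
    show (2 * (k : ℝ) + (2 * a + 1) + 1) / (2 * a + 1 + 1) = (k + a + 1) / (a + 1) by
      field_simp; ring]
  exact ⟨rpow_le_prod_div ha k, prod_div_le_mul_rpow ha hk⟩

theorem stmt9 (n : ℕ) (hn : 1 ≤ n) (ε : ℕ) (hε : ε ≤ 1) (ν : ℝ)
    (hν : ν = 2 * (n : ℝ) + ε - 1) (k : ℕ) (hk : 1 ≤ k) :
    ((2 * (k : ℝ) + ν + 1) / (ν + 1)) ^ ((ν - 1) / 2) ≤
      |∏ j ∈ Finset.range k,
        ((2 * ((n : ℝ) + 2 * j) + ε + 1 + ν) / 4) / ((2 * ((n : ℝ) + 2 * j + 2) + ε - 1 - ν) / 4)| ∧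
    |∏ j ∈ Finset.range k,
        ((2 * ((n : ℝ) + 2 * j) + ε + 1 + ν) / 4) / ((2 * ((n : ℝ) + 2 * j + 2) + ε - 1 - ν) / 4)| ≤
      ((ν + 1) / 2) * (k : ℝ) ^ ((ν - 1) / 2) :=
  stmt9_general n hn ε ν hν k hk
end

section
/- In the complementary series with parameter ν ∈ (-1,1)\{0} and ε = 0, the ratio ‖u_{2k}‖²/|D₀(u_{2k})|² equals ((4k+1+ν)/(1+ν)) · ∏_{j=1}^{k} (1 + (4+4ν)/((4j+1+ν)(4j-3-ν))) for all integers k ≥ 0, where ‖u_{2k}‖² = ∏_{j=1}^{2k} (2j-1-ν)/(2j-1+ν) and D₀(u_{2k}) = ∏_{j=1}^{k} β(2j-1) with β(m) = (2m-1-ν)/(2m+1+ν). -/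
/-!
Both sides are products over `j = 1, …, k` of one and the same factor
`(4j-1-ν)(4j-1+ν) / ((4j-3-ν)(4j-3+ν))`. On the left this comes from grouping the
`2k` factors of `‖u_{2k}‖²` in consecutive pairs and dividing each pair by `β(2j-1)²`.
On the right, `(4k+1+ν)/(1+ν)` telescopes into `∏ (4j+1+ν)/(4j-3+ν)`, and
`(4j+1+ν)(4j-3-ν) + 4 + 4ν = (4j-1-ν)(4j-1+ν)`.
-/

open Finset

theorem Finset.prod_Icc_one_two_mul {M : Type*} [CommMonoid M] (f : ℕ → M) (k : ℕ) :
    ∏ j ∈ Icc 1 (2 * k), f j = ∏ j ∈ Icc 1 k, f (2 * j - 1) * f (2 * j) := by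
  induction k with
  | zero => simp
  | succ k ih =>
    rw [show 2 * (k + 1) = 2 * k + 1 + 1 by ring, prod_Icc_succ_top (by omega),
      prod_Icc_succ_top (by omega), prod_Icc_succ_top (by omega), ih, mul_assoc]
    congr 3

theorem Finset.prod_Icc_one_div_of_ne_zero {K : Type*} [Field K] (g : ℕ → K)
    (hg : ∀ i, 1 ≤ i → g i ≠ 0) (n : ℕ) :
    ∏ i ∈ Icc 1 n, g (i + 1) / g i = g (n + 1) / g 1 := by
  induction n with
  | zero => simp [hg 1 le_rfl]
  | succ n ih =>
    rw [prod_Icc_succ_top (by omega), ih]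
    field_simp [hg (n + 1) (by omega)]

lemma sub_pos_and_add_pos_of_one_le {ν m : ℝ} (hν : ν ∈ Set.Ioo (-1 : ℝ) 1) (hm : 1 ≤ m) :
    0 < m - ν ∧ 0 < m + ν := by
  obtain ⟨hl, hr⟩ := hν
  constructor <;> linarith

/-- The factor by which the ratio `‖u_{2j}‖² / D₀(u_{2j})²` grows from `j - 1` to `j`. -/
noncomputable def blockFactor (ν x : ℝ) : ℝ :=
  (4 * x - 1 - ν) * (4 * x - 1 + ν) / ((4 * x - 3 - ν) * (4 * x - 3 + ν))

section

variable {ν x : ℝ} (hν : ν ∈ Set.Ioo (-1 : ℝ) 1) (hx : 1 ≤ x)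
include hν hx

lemma norm_pair_div_beta_sq_eq_blockFactor :
    (2 * (2 * x - 1) - 1 - ν) / (2 * (2 * x - 1) - 1 + ν) *
        ((2 * (2 * x) - 1 - ν) / (2 * (2 * x) - 1 + ν)) /
      ((2 * (2 * x - 1) - 1 - ν) / (2 * (2 * x - 1) + 1 + ν)) ^ 2 =
    blockFactor ν x := by
  obtain ⟨h₁, h₁'⟩ := sub_pos_and_add_pos_of_one_le hν (by linarith : 1 ≤ 4 * x - 3)
  obtain ⟨-, h₃⟩ := sub_pos_and_add_pos_of_one_le hν (by linarith : 1 ≤ 4 * x - 1)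
  rw [show 2 * (2 * x - 1) - 1 - ν = 4 * x - 3 - ν by ring,
    show 2 * (2 * x - 1) - 1 + ν = 4 * x - 3 + ν by ring,
    show 2 * (2 * x - 1) + 1 + ν = 4 * x - 1 + ν by ring,
    show 2 * (2 * x) - 1 - ν = 4 * x - 1 - ν by ring,
    show 2 * (2 * x) - 1 + ν = 4 * x - 1 + ν by ring, blockFactor]
  field_simp

lemma telescoping_mul_factor_eq_blockFactor :
    (4 * x + 1 + ν) / (4 * x - 3 + ν) *
        (1 + (4 + 4 * ν) / ((4 * x + 1 + ν) * (4 * x - 3 - ν))) =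
      blockFactor ν x := by
  obtain ⟨h₁, h₁'⟩ := sub_pos_and_add_pos_of_one_le hν (by linarith : 1 ≤ 4 * x - 3)
  obtain ⟨-, h₅⟩ := sub_pos_and_add_pos_of_one_le hν (by linarith : 1 ≤ 4 * x + 1)
  unfold blockFactor
  field_simp
  ring

end

lemma norm_div_D₀_sq_eq_prod_blockFactor {ν : ℝ} (hν : ν ∈ Set.Ioo (-1 : ℝ) 1) (k : ℕ) :
    (∏ j ∈ Icc 1 (2 * k), (2 * (j : ℝ) - 1 - ν) / (2 * (j : ℝ) - 1 + ν)) /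
        (∏ j ∈ Icc 1 k, (2 * (2 * (j : ℝ) - 1) - 1 - ν) / (2 * (2 * (j : ℝ) - 1) + 1 + ν)) ^ 2 =
      ∏ j ∈ Icc 1 k, blockFactor ν j := by
  rw [prod_Icc_one_two_mul, ← prod_pow, ← prod_div_distrib]
  refine prod_congr rfl fun j hj ↦ ?_
  have hj : 1 ≤ j := (mem_Icc.mp hj).1
  rw [← norm_pair_div_beta_sq_eq_blockFactor hν (by exact_mod_cast hj)]
  push_cast [Nat.cast_sub (by omega : 1 ≤ 2 * j)]
  rfl

lemma telescoping_mul_prod_eq_prod_blockFactor {ν : ℝ} (hν : ν ∈ Set.Ioo (-1 : ℝ) 1) (k : ℕ) :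
    (4 * (k : ℝ) + 1 + ν) / (1 + ν) *
        ∏ j ∈ Icc 1 k, (1 + (4 + 4 * ν) / ((4 * (j : ℝ) + 1 + ν) * (4 * (j : ℝ) - 3 - ν))) =
      ∏ j ∈ Icc 1 k, blockFactor ν j := by
  have htelescope : ∏ j ∈ Icc 1 k, (4 * (j : ℝ) + 1 + ν) / (4 * j - 3 + ν) =
      (4 * (k : ℝ) + 1 + ν) / (1 + ν) := by
    refine (prod_congr rfl fun j _ ↦ ?_).trans
      ((prod_Icc_one_div_of_ne_zero (fun i : ℕ ↦ 4 * (i : ℝ) - 3 + ν) (fun i hi ↦ ?_) k).trans ?_)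
    · push_cast
      ring_nf
    · have : (1 : ℝ) ≤ i := by exact_mod_cast hi
      exact (sub_pos_and_add_pos_of_one_le hν (by linarith : 1 ≤ 4 * (i : ℝ) - 3)).2.ne'
    · push_cast
      ring_nf
  rw [← htelescope, ← prod_mul_distrib]
  exact prod_congr rfl fun j hj ↦
    telescoping_mul_factor_eq_blockFactor hν (by exact_mod_cast (mem_Icc.mp hj).1)

theorem stmt11_general (ν : ℝ) (h1 : ν ∈ Set.Ioo (-1 : ℝ) 1) (k : ℕ) :
    (∏ j ∈ Finset.Icc 1 (2 * k), (2 * (j : ℝ) - 1 - ν) / (2 * (j : ℝ) - 1 + ν)) /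
      (∏ j ∈ Finset.Icc 1 k,
        (2 * (2 * (j : ℝ) - 1) - 1 - ν) / (2 * (2 * (j : ℝ) - 1) + 1 + ν)) ^ 2 =
    ((4 * (k : ℝ) + 1 + ν) / (1 + ν)) *
      ∏ j ∈ Finset.Icc 1 k, (1 + (4 + 4 * ν) / ((4 * (j : ℝ) + 1 + ν) * (4 * (j : ℝ) - 3 - ν))) := by
  rw [norm_div_D₀_sq_eq_prod_blockFactor h1, telescoping_mul_prod_eq_prod_blockFactor h1]

theorem stmt11 (ν : ℝ) (h1 : ν ∈ Set.Ioo (-1 : ℝ) 1) (h2 : ν ≠ 0) (k : ℕ) :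
    (∏ j ∈ Finset.Icc 1 (2 * k), (2 * (j : ℝ) - 1 - ν) / (2 * (j : ℝ) - 1 + ν)) /
      (∏ j ∈ Finset.Icc 1 k,
        (2 * (2 * (j : ℝ) - 1) - 1 - ν) / (2 * (2 * (j : ℝ) - 1) + 1 + ν)) ^ 2 =
    ((4 * (k : ℝ) + 1 + ν) / (1 + ν)) *
      ∏ j ∈ Finset.Icc 1 k, (1 + (4 + 4 * ν) / ((4 * (j : ℝ) + 1 + ν) * (4 * (j : ℝ) - 3 - ν))) :=
  stmt11_general ν h1 k
end

section
/- In the discrete series with ν = 2n + ε - 1, the ratio ‖u_{n+2k}‖²/|D₀(u_{n+2k})|² equals ((2k+1+ν)/(1+ν)) · ∏_{j=1}^{k} (1 + (1+ν)/((2j-1)(2j+1+ν))) for every integer k ≥ 0, where ‖u_{n+2k}‖² = ∏_{j=1}^{2k} (2(n+j)+ε-1-ν)/(2(n+j)+ε-1+ν) and D₀(u_{n+2k}) = ∏_{j=1}^{k} β(n+2j-1) with β(m) = (2m+ε-1-ν)/(2m+ε+1+ν). -/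
set_option maxHeartbeats 2000000

theorem stmt14 (n : ℕ) (hn : 1 ≤ n) (ε : ℕ) (hε : ε ≤ 1) (ν : ℝ)
    (hν : ν = 2 * (n : ℝ) + ε - 1) (k : ℕ) :
    (∏ j ∈ Finset.Icc 1 (2 * k),
        (2 * ((n : ℝ) + j) + ε - 1 - ν) / (2 * ((n : ℝ) + j) + ε - 1 + ν)) /
      (∏ j ∈ Finset.Icc 1 k,
        (2 * ((n : ℝ) + 2 * (j : ℝ) - 1) + ε - 1 - ν) /
          (2 * ((n : ℝ) + 2 * (j : ℝ) - 1) + ε + 1 + ν)) ^ 2 =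
    ((2 * (k : ℝ) + 1 + ν) / (1 + ν)) *
      ∏ j ∈ Finset.Icc 1 k, (1 + (1 + ν) / ((2 * (j : ℝ) - 1) * (2 * (j : ℝ) + 1 + ν))) := by
  subst hν
  have hn1 : (1:ℝ) ≤ (n:ℝ) := by exact_mod_cast hn
  have hε0 : (0:ℝ) ≤ (ε:ℝ) := Nat.cast_nonneg ε
  induction k with
  | zero =>
    simp
    rw [div_self (by linarith : (2*(n:ℝ)+ε) ≠ 0)]
  | succ k ih =>
    have hk0 : (0:ℝ) ≤ (k:ℝ) := Nat.cast_nonneg k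
    have hQ : (∏ j ∈ Finset.Icc 1 k,
        (2 * ((n : ℝ) + 2 * (j : ℝ) - 1) + ε - 1 - (2*(n:ℝ)+ε-1)) /
          (2 * ((n : ℝ) + 2 * (j : ℝ) - 1) + ε + 1 + (2*(n:ℝ)+ε-1))) ≠ 0 := by
      apply Finset.prod_ne_zero_iff.mpr
      intro j hj
      have hj1 : (1:ℝ) ≤ (j:ℝ) := by
        exact_mod_cast (Finset.mem_Icc.mp hj).1
      apply div_ne_zero <;> nlinarith
    have hP := (div_eq_iff (pow_ne_zero 2 hQ)).mp ih
    rw [show 2 * (k+1) = (2*k+1) + 1 from by ring, Finset.prod_Icc_succ_top (by omega),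
      Finset.prod_Icc_succ_top (by omega), Finset.prod_Icc_succ_top (by omega),
      Finset.prod_Icc_succ_top (by omega), hP]
    set Q := (∏ j ∈ Finset.Icc 1 k,
        (2 * ((n : ℝ) + 2 * (j : ℝ) - 1) + ε - 1 - (2*(n:ℝ)+ε-1)) /
          (2 * ((n : ℝ) + 2 * (j : ℝ) - 1) + ε + 1 + (2*(n:ℝ)+ε-1))) with hQdef
    set R := (∏ j ∈ Finset.Icc 1 k,
        (1 + (1 + (2*(n:ℝ)+ε-1)) / ((2 * (j : ℝ) - 1) * (2 * (j : ℝ) + 1 + (2*(n:ℝ)+ε-1))))) with hRdef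
    push_cast
    have h1 : (2:ℝ) * (n + (2*(k:ℝ)+1)) + ε - 1 + (2*(n:ℝ)+ε-1) ≠ 0 := by nlinarith
    have h2 : (2:ℝ) * (n + (2*(k:ℝ)+1+1)) + ε - 1 + (2*(n:ℝ)+ε-1) ≠ 0 := by nlinarith
    have h3 : (2:ℝ) * ((n:ℝ) + 2 * ((k:ℝ)+1) - 1) + ε + 1 + (2*(n:ℝ)+ε-1) ≠ 0 := by nlinarith
    have h4 : (2:ℝ) * ((n:ℝ) + 2 * ((k:ℝ)+1) - 1) + ε - 1 - (2*(n:ℝ)+ε-1) ≠ 0 := by nlinarith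
    have h5 : (1:ℝ) + (2*(n:ℝ)+ε-1) ≠ 0 := by nlinarith
    have h6 : (2:ℝ) * ((k:ℝ)+1) - 1 ≠ 0 := by nlinarith
    have h7 : (2:ℝ) * ((k:ℝ)+1) + 1 + (2*(n:ℝ)+ε-1) ≠ 0 := by nlinarith
    clear_value Q R
    clear hQdef hRdef ih hP
    have main : ∀ (S S' a₁ a₂ c d : ℝ), S*(a₁*a₂)/c^2 = S'*d →
        S*R*Q^2*a₁*a₂/(Q*c)^2 = S'*(R*d) := by
      intro S S' a₁ a₂ c d h
      rw [mul_pow, show S*R*Q^2*a₁*a₂ = Q^2*(R*(S*(a₁*a₂))) from by ring,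
        mul_div_mul_left _ _ (pow_ne_zero 2 hQ), mul_div_assoc, h]
      ring
    apply main
    rw [show 2 * ((n:ℝ) + (2 * (k:ℝ) + 1)) + ε - 1 - (2 * (n:ℝ) + ε - 1) = 4*(k:ℝ)+2 from by ring,
      show 2 * ((n:ℝ) + (2 * (k:ℝ) + 1)) + ε - 1 + (2 * (n:ℝ) + ε - 1) = 4*(n:ℝ)+2*ε+4*k from by ring,
      show 2 * ((n:ℝ) + (2 * (k:ℝ) + 1 + 1)) + ε - 1 - (2 * (n:ℝ) + ε - 1) = 4*(k:ℝ)+4 from by ring,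
      show 2 * ((n:ℝ) + (2 * (k:ℝ) + 1 + 1)) + ε - 1 + (2 * (n:ℝ) + ε - 1) = 4*(n:ℝ)+2*ε+4*k+2 from by ring,
      show 2 * ((n:ℝ) + 2 * ((k:ℝ) + 1) - 1) + ε - 1 - (2 * (n:ℝ) + ε - 1) = 4*(k:ℝ)+2 from by ring,
      show 2 * ((n:ℝ) + 2 * ((k:ℝ) + 1) - 1) + ε + 1 + (2 * (n:ℝ) + ε - 1) = 4*(n:ℝ)+2*ε+4*k+2 from by ring,
      show 2 * (k:ℝ) + 1 + (2 * (n:ℝ) + ε - 1) = 2*(n:ℝ)+ε+2*k from by ring,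
      show 2 * ((k:ℝ) + 1) + 1 + (2 * (n:ℝ) + ε - 1) = 2*(n:ℝ)+ε+2*k+2 from by ring,
      show 2 * ((k:ℝ) + 1) - 1 = 2*(k:ℝ)+1 from by ring,
      show 1 + (2 * (n:ℝ) + ε - 1) = 2*(n:ℝ)+ε from by ring]
    have e1 : (2*(n:ℝ)+ε) ≠ 0 := by nlinarith
    have e2 : (4*(k:ℝ)+2) ≠ 0 := by nlinarith
    have e3 : (4*(n:ℝ)+2*ε+4*k) ≠ 0 := by nlinarith
    have e4 : (4*(n:ℝ)+2*ε+4*k+2) ≠ 0 := by nlinarith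
    have e5 : (2*(k:ℝ)+1) ≠ 0 := by nlinarith
    have e6 : (2*(n:ℝ)+ε+2*k+2) ≠ 0 := by nlinarith
    field_simp
    ring
end

section
/- Let b⁺(k) = (2k+ε+1+ν)/4 and b⁻(k) = (2k+ε-1-ν)/4 in a discrete series representation (ν = 2n+ε-1, n ≥ 1), and let D₀(u_{n+2i}) = ∏_{m=1}^{i} β(n+2m-1) with β(m) = b⁻(m)/b⁺(m). Suppose f: {n, n+2, n+4, ...} → ℂ satisfies Σ_{i=0}^{∞} f(n+2i)·D₀(u_{n+2i}) = 0 (absolutely convergent). Then the sequence g defined by g(n+2k+1) = (1/b⁻(n+1))·g¹(n+2k+1)·Σ_{i=k+1}^{∞} f(n+2i)·D₀(u_{n+2i}) and g(n+2k) = 0, where g¹(n+2k+1) = ∏_{j=1}^{k} b⁺(n+2j-1)/b⁻(n+2j+1), satisfies the difference equation: f(n+k+1) = b⁺(n+k)g(n+k) - b⁻(n+k+2)g(n+k+2) for all k ≥ 0, and f(n) = -b⁻(n+1)g(n+1). -/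
/-!
Put `a i = D₀(u_{n+2i}) f(n+2i)` and `T j = ∑_{i ≥ j} a i`. Then `g(n+2k+1)` is a multiple of
`g¹(k) T(k+1)` and `T j = a j + T(j+1)`. The products `g¹` and `D₀` telescope against each other:
`b⁺(n+2t+1) g¹(t) D₀(t+1) = b⁻(n+1)` and `b⁺(n+2t+1) g¹(t) = b⁻(n+2t+3) g¹(t+1)`, and these two
identities are exactly the odd steps of the difference equation. The even steps read `0 = 0`, and
the initial relation is `T 1 = -a 0`, i.e. `∑ a = 0`. Since `b⁺(m) = (m+n+ε)/2` and
`b⁻(m) = (m-n)/2`, no factor of `g¹` or `D₀` vanishes.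
-/

open Finset

theorem Finset.prod_Icc_one_eq_prod_range {M : Type*} [CommMonoid M] (φ : ℕ → M) (i : ℕ) :
    ∏ m ∈ Icc 1 i, φ m = ∏ m ∈ range i, φ (m + 1) := by
  induction i with
  | zero => simp
  | succ i ih => rw [prod_Icc_succ_top (by omega), ih, prod_range_succ]

theorem prod_range_div_mul_prod_range_succ_div {K : Type*} [Field K] {P Q : ℕ → K}
    (hP : ∀ j, P j ≠ 0) (hQ : ∀ j, Q j ≠ 0) (t : ℕ) :
    (∏ j ∈ range t, P j / Q (j + 1)) * ∏ j ∈ range (t + 1), Q j / P j = Q 0 / P t := by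
  induction t with
  | zero => simp
  | succ t ih =>
    rw [prod_range_succ, prod_range_succ _ (t + 1), mul_mul_mul_comm, ih]
    field_simp [hP t, hP (t + 1), hQ (t + 1)]

theorem Summable.tsum_nat_add_eq_add_tsum {G : Type*} [AddCommGroup G] [TopologicalSpace G]
    [IsTopologicalAddGroup G] [T2Space G] {a : ℕ → G} (ha : Summable a) (j : ℕ) :
    ∑' i, a (j + i) = a j + ∑' i, a (j + 1 + i) := by
  have hj : Summable fun i => a (j + i) := by
    simpa only [add_comm j] using (summable_nat_add_iff j).2 ha
  rw [hj.tsum_eq_zero_add, add_zero]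
  simp only [add_assoc, add_comm 1]

section
variable {E : Type*} [AddCommGroup E] [Module ℝ E] [TopologicalSpace E]
  [IsTopologicalAddGroup E] [T2Space E] {P Q w u : ℕ → ℝ} {F G : ℕ → E}

theorem eq_smul_sub_smul_of_tail_tsum (hP : ∀ j, P j ≠ 0) (hQ : ∀ j, Q j ≠ 0)
    (hw : ∀ i, w i = ∏ j ∈ range i, Q j / P j) (hu : ∀ k, u k = ∏ j ∈ range k, P j / Q (j + 1))
    (hF : Summable fun i => w i • F i)
    (hG : ∀ k, G k = (1 / Q 0 * u k) • ∑' i, w (k + 1 + i) • F (k + 1 + i)) (t : ℕ) :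
    F (t + 1) = P t • G t - Q (t + 1) • G (t + 1) := by
  have hwu : P t * (1 / Q 0 * u t) * w (t + 1) = 1 := by
    rw [hu, hw, mul_assoc, mul_assoc, prod_range_div_mul_prod_range_succ_div hP hQ]
    field_simp [hP t, hQ 0]
  have hu_succ : P t * (1 / Q 0 * u t) = Q (t + 1) * (1 / Q 0 * u (t + 1)) := by
    rw [hu, hu, prod_range_succ]
    field_simp [hQ (t + 1)]
  rw [hG, hG, hF.tsum_nat_add_eq_add_tsum (t + 1)]
  linear_combination (norm := module)
    (-hwu) • F (t + 1) - hu_succ • ∑' i, w (t + 1 + 1 + i) • F (t + 1 + 1 + i)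

theorem eq_neg_smul_of_tsum_eq_zero (hQ0 : Q 0 ≠ 0) (hw0 : w 0 = 1) (hu0 : u 0 = 1)
    (hF : Summable fun i => w i • F i) (hsum : ∑' i, w i • F i = 0)
    (hG : ∀ k, G k = (1 / Q 0 * u k) • ∑' i, w (k + 1 + i) • F (k + 1 + i)) :
    F 0 = -Q 0 • G 0 := by
  have htail := hF.tsum_nat_add_eq_add_tsum 0
  simp only [zero_add, hw0, one_smul, hsum] at htail
  have hQu : Q 0 * (1 / Q 0 * u 0) = 1 := by
    rw [hu0]
    field_simp
  rw [hG]
  simp only [zero_add]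
  linear_combination (norm := module) -htail + hQu • ∑' i, w (1 + i) • F (1 + i)
end

theorem eq_mul_sub_mul_of_odd_steps {R : Type*} [Ring R] {f g cp cm : ℤ → R} {n : ℤ}
    (hf : ∀ i : ℕ, f (n + 2 * i + 1) = 0) (hg : ∀ k : ℕ, g (n + 2 * k) = 0)
    (hodd : ∀ t : ℕ, f (n + 2 * ↑(t + 1)) =
      cp (n + 2 * t + 1) * g (n + 2 * t + 1) - cm (n + 2 * ↑(t + 1) + 1) * g (n + 2 * ↑(t + 1) + 1))
    (k : ℕ) : f (n + k + 1) = cp (n + k) * g (n + k) - cm (n + k + 2) * g (n + k + 2) := by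
  obtain ⟨t, rfl | rfl⟩ := Nat.even_or_odd' k
  · have hg' : g (n + ↑(2 * t) + 2) = 0 := by
      convert hg (t + 1) using 2
      push_cast; ring
    push_cast at hg' ⊢
    rw [hf, hg, hg', mul_zero, mul_zero, sub_zero]
  · have e1 : n + ↑(2 * t + 1) + 1 = n + 2 * ↑(t + 1) := by push_cast; ring
    have e2 : n + ↑(2 * t + 1) + 2 = n + 2 * ↑(t + 1) + 1 := by push_cast; ring
    have e : n + ↑(2 * t + 1) = n + 2 * t + 1 := by push_cast; ring
    rw [e1, e2, e]
    exact hodd t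

theorem stmt17_general (n : ℕ) (ε : ℕ) (ν : ℝ)
    (hν : ν = 2 * (n : ℝ) + ε - 1)
    (bp bm : ℤ → ℝ)
    (hbp : ∀ m : ℤ, bp m = (2 * (m : ℝ) + ε + 1 + ν) / 4)
    (hbm : ∀ m : ℤ, bm m = (2 * (m : ℝ) + ε - 1 - ν) / 4)
    (D0 : ℕ → ℝ)
    (hD0 : ∀ i : ℕ, D0 i =
      ∏ m ∈ Finset.Icc 1 i, bm ((n : ℤ) + 2 * (m : ℤ) - 1) / bp ((n : ℤ) + 2 * (m : ℤ) - 1))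
    (g1 : ℕ → ℝ)
    (hg1 : ∀ k : ℕ, g1 k =
      ∏ j ∈ Finset.Icc 1 k, bp ((n : ℤ) + 2 * (j : ℤ) - 1) / bm ((n : ℤ) + 2 * (j : ℤ) + 1))
    (f : ℤ → ℂ)
    (hfodd : ∀ i : ℕ, f ((n : ℤ) + 2 * i + 1) = 0)
    (hsum : Summable (fun i : ℕ => ‖f ((n : ℤ) + 2 * i)‖ * |D0 i|))
    (hzero : ∑' i : ℕ, f ((n : ℤ) + 2 * i) * ((D0 i : ℝ) : ℂ) = 0)
    (g : ℤ → ℂ)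
    (hgodd : ∀ k : ℕ, g ((n : ℤ) + 2 * k + 1) =
      ((1 / bm ((n : ℤ) + 1) * g1 k : ℝ) : ℂ) *
        ∑' i : ℕ, f ((n : ℤ) + 2 * ((k : ℤ) + 1 + i)) * ((D0 (k + 1 + i) : ℝ) : ℂ))
    (hgeven : ∀ k : ℕ, g ((n : ℤ) + 2 * k) = 0) :
    (∀ k : ℕ, f ((n : ℤ) + k + 1) =
      ((bp ((n : ℤ) + k) : ℝ) : ℂ) * g ((n : ℤ) + k) -
        ((bm ((n : ℤ) + k + 2) : ℝ) : ℂ) * g ((n : ℤ) + k + 2)) ∧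
    f (n : ℤ) = -((bm ((n : ℤ) + 1) : ℝ) : ℂ) * g ((n : ℤ) + 1) := by
  have hP : ∀ j : ℕ, bp (n + 2 * j + 1) ≠ 0 := fun j => by
    rw [hbp, hν]; push_cast; ring_nf; positivity
  have hQ : ∀ j : ℕ, bm (n + 2 * j + 1) ≠ 0 := fun j => by
    rw [hbm, hν]; push_cast; ring_nf; positivity
  have hw : ∀ i, D0 i = ∏ j ∈ range i, bm (n + 2 * j + 1) / bp (n + 2 * j + 1) := fun i => by
    rw [hD0, prod_Icc_one_eq_prod_range]
    exact prod_congr rfl fun j _ => by push_cast; ring_nf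
  have hu : ∀ k, g1 k = ∏ j ∈ range k, bp (n + 2 * j + 1) / bm (n + 2 * ↑(j + 1) + 1) := fun k => by
    rw [hg1, prod_Icc_one_eq_prod_range]
    exact prod_congr rfl fun j _ => by push_cast; ring_nf
  have hF : Summable fun i : ℕ => D0 i • f (n + 2 * i) := by
    refine Summable.of_norm (hsum.congr fun i => ?_)
    rw [norm_smul, Real.norm_eq_abs, mul_comm]
  have hG : ∀ k : ℕ, g (n + 2 * k + 1) = (1 / bm (n + 2 * ↑(0 : ℕ) + 1) * g1 k) •
      ∑' i, D0 (k + 1 + i) • f (n + 2 * ↑(k + 1 + i)) := fun k => by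
    simp only [hgodd, Nat.cast_zero, mul_zero, add_zero, Nat.cast_add, Nat.cast_one,
      Complex.real_smul]
    exact congrArg _ (tsum_congr fun i => mul_comm _ _)
  refine ⟨eq_mul_sub_mul_of_odd_steps (cp := fun m => (bp m : ℂ)) (cm := fun m => (bm m : ℂ))
    hfodd hgeven fun t => ?_, ?_⟩
  · simpa only [Complex.real_smul] using eq_smul_sub_smul_of_tail_tsum
      (F := fun i : ℕ => f (n + 2 * i)) (G := fun k : ℕ => g (n + 2 * k + 1)) hP hQ hw hu hF hG t
  · have := eq_neg_smul_of_tsum_eq_zero (Q := fun j : ℕ => bm (n + 2 * j + 1))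
      (G := fun k : ℕ => g (n + 2 * k + 1)) (hQ 0)
      ((hw 0).trans (prod_range_zero _)) ((hu 0).trans (prod_range_zero _)) hF
      (by simpa only [Complex.real_smul, mul_comm (f _)] using hzero) hG
    simpa only [Nat.cast_zero, mul_zero, add_zero, Complex.real_smul, Complex.ofReal_neg] using this

theorem stmt17 (n : ℕ) (hn : 1 ≤ n) (ε : ℕ) (hε : ε ≤ 1) (ν : ℝ)
    (hν : ν = 2 * (n : ℝ) + ε - 1)
    (bp bm : ℤ → ℝ)
    (hbp : ∀ m : ℤ, bp m = (2 * (m : ℝ) + ε + 1 + ν) / 4)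
    (hbm : ∀ m : ℤ, bm m = (2 * (m : ℝ) + ε - 1 - ν) / 4)
    (D0 : ℕ → ℝ)
    (hD0 : ∀ i : ℕ, D0 i =
      ∏ m ∈ Finset.Icc 1 i, bm ((n : ℤ) + 2 * (m : ℤ) - 1) / bp ((n : ℤ) + 2 * (m : ℤ) - 1))
    (g1 : ℕ → ℝ)
    (hg1 : ∀ k : ℕ, g1 k =
      ∏ j ∈ Finset.Icc 1 k, bp ((n : ℤ) + 2 * (j : ℤ) - 1) / bm ((n : ℤ) + 2 * (j : ℤ) + 1))
    (f : ℤ → ℂ)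
    (hfodd : ∀ i : ℕ, f ((n : ℤ) + 2 * i + 1) = 0)
    (hsum : Summable (fun i : ℕ => ‖f ((n : ℤ) + 2 * i)‖ * |D0 i|))
    (hzero : ∑' i : ℕ, f ((n : ℤ) + 2 * i) * ((D0 i : ℝ) : ℂ) = 0)
    (g : ℤ → ℂ)
    (hgodd : ∀ k : ℕ, g ((n : ℤ) + 2 * k + 1) =
      ((1 / bm ((n : ℤ) + 1) * g1 k : ℝ) : ℂ) *
        ∑' i : ℕ, f ((n : ℤ) + 2 * ((k : ℤ) + 1 + i)) * ((D0 (k + 1 + i) : ℝ) : ℂ))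
    (hgeven : ∀ k : ℕ, g ((n : ℤ) + 2 * k) = 0) :
    (∀ k : ℕ, f ((n : ℤ) + k + 1) =
      ((bp ((n : ℤ) + k) : ℝ) : ℂ) * g ((n : ℤ) + k) -
        ((bm ((n : ℤ) + k + 2) : ℝ) : ℂ) * g ((n : ℤ) + k + 2)) ∧
    f (n : ℤ) = -((bm ((n : ℤ) + 1) : ℝ) : ℂ) * g ((n : ℤ) + 1) :=
  stmt17_general n ε ν hν bp bm hbp hbm D0 hD0 g1 hg1 f hfodd hsum hzero g hgodd hgeven
end
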